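/- A stable state (vertex with no outgoing edges forming a single-vertex attractor) exists in 𝔹(Γ) if and only if one exists in Γ; likewise a cyclic attractor (attractor with more than one vertex) exists in 𝔹(Γ) if and only if one exists in Γ. -/

import Mathlib

/-!
Common setup: multilevel discrete networks (Faure–Kaji, "A circuit-preserving
mapping from multilevel to Boolean dynamics").

A gene `i` takes levels in `{0,...,b i}`, encoded as `Fin (b i + 1)`.
The Boolean case is `b i = 1`.
-/

namespace GRN

section Generic

variable {ι : Type*} [Fintype ι] [DecidableEq ι] (b : ι → ℕ)

/-- the state space `∏ i {0,…,b i}` -/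
abbrev GState := ∀ i : ι, Fin (b i + 1)

/-- L¹ distance between states -/
def dist1 (x x' : GState b) : ℕ := ∑ i, Nat.dist (x i : ℕ) (x' i : ℕ)

/-- edge relation of the asynchronous state transition graph `Γ(f)` -/
def stgEdge (f : GState b → GState b) (x x' : GState b) : Prop :=
  ∃ j : ι, (∀ k, k ≠ j → x' k = x k) ∧
    (((x j : ℕ) < (f x j : ℕ) ∧ (x' j : ℕ) = (x j : ℕ) + 1) ∨
     ((f x j : ℕ) < (x j : ℕ) ∧ (x' j : ℕ) + 1 = (x j : ℕ)))

/-- a grid graph: every edge joins states at distance one, and there are no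
two parallel outward edges at any vertex -/
def IsGridGraph (E : GState b → GState b → Prop) : Prop :=
  (∀ x x', E x x' → dist1 b x x' = 1) ∧
  (∀ (x x' x'' : GState b) (j : ι), E x x' → E x x'' →
    (∀ k, k ≠ j → x' k = x k) → (∀ k, k ≠ j → x'' k = x k) → x' = x'')

/-- asymptotic evolution function: `f i x ∈ {0, x i, b i}` -/
def Asymptotic (f : GState b → GState b) : Prop :=
  ∀ (x : GState b) (i : ι), (f x i : ℕ) = 0 ∨ f x i = x i ∨ (f x i : ℕ) = b i

/-- stepwise (unitary) evolution function: `|f i x - x i| ≤ 1` -/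
def Stepwise (f : GState b → GState b) : Prop :=
  ∀ (x : GState b) (i : ι), (f x i : ℕ) ≤ (x i : ℕ) + 1 ∧ (x i : ℕ) ≤ (f x i : ℕ) + 1

/-- the asymptotic function `f̄` associated with `f` -/
def asym (f : GState b → GState b) : GState b → GState b := fun x i =>
  if (x i : ℕ) < (f x i : ℕ) then Fin.last (b i)
  else if (f x i : ℕ) < (x i : ℕ) then 0 else x i

/-- the stepwise function `f̂` associated with `f` -/
def stepw (f : GState b → GState b) : GState b → GState b := fun x i =>
  if h : (x i : ℕ) < (f x i : ℕ) then ⟨(x i : ℕ) + 1, Nat.lt_of_le_of_lt h (f x i).isLt⟩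
  else if (f x i : ℕ) < (x i : ℕ) then
    ⟨(x i : ℕ) - 1, lt_of_le_of_lt (Nat.sub_le _ _) (x i).isLt⟩
  else x i

/-- `x + e j` (defined when `x j < b j`) -/
def bump (x : GState b) (j : ι) (h : (x j : ℕ) < b j) : GState b :=
  Function.update x j ⟨(x j : ℕ) + 1, Nat.succ_lt_succ h⟩

/-- `x - e j` -/
def drop (x : GState b) (j : ι) : GState b :=
  Function.update x j ⟨(x j : ℕ) - 1, lt_of_le_of_lt (Nat.sub_le _ _) (x j).isLt⟩

/-- positive edge `j → i` in the local interaction graph `Gf(x)`: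
`∂⁺ⱼfᵢ(x) > 0` or `∂⁻ⱼfᵢ(x) > 0` -/
def PosEdge (f : GState b → GState b) (x : GState b) (j i : ι) : Prop :=
  (∃ h : (x j : ℕ) < b j, (f x i : ℕ) < (f (bump b x j h) i : ℕ)) ∨
  (0 < (x j : ℕ) ∧ (f (drop b x j) i : ℕ) < (f x i : ℕ))

/-- negative edge `j → i` in the local interaction graph `Gf(x)` -/
def NegEdge (f : GState b → GState b) (x : GState b) (j i : ι) : Prop :=
  (∃ h : (x j : ℕ) < b j, (f (bump b x j h) i : ℕ) < (f x i : ℕ)) ∨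
  (0 < (x j : ℕ) ∧ (f x i : ℕ) < (f (drop b x j) i : ℕ))

/-- an edge with sign `s` (`true` = negative) -/
def SignedEdge (f : GState b → GState b) (x : GState b) (s : Bool) (j i : ι) : Prop :=
  if s then NegEdge b f x j i else PosEdge b f x j i

/-- a type-1 functional circuit at `x`, negative iff `neg`: a cycle (with
pairwise-distinct vertices) in the local interaction graph `Gf(x)` whose number
of negative edges is odd iff `neg` -/
def HasType1Circuit (f : GState b → GState b) (x : GState b) (neg : Bool) : Prop :=
  ∃ (k : ℕ) (v : Fin (k + 1) → ι) (s : Fin (k + 1) → Bool),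
    Function.Injective v ∧
    (∀ t, SignedEdge b f x (s t) (v t) (v (t + 1))) ∧
    (Odd (Finset.univ.filter fun t => s t = true).card ↔ neg = true)

/-- mutual reachability -/
def InSameSCC (E : GState b → GState b → Prop) (x y : GState b) : Prop :=
  Relation.ReflTransGen E x y ∧ Relation.ReflTransGen E y x

/-- the strongly connected component of `x` -/
def sccOf (E : GState b → GState b → Prop) (x : GState b) : Set (GState b) :=
  {y | InSameSCC b E x y}

/-- attractor: terminal strongly connected set of states -/
def IsAttractor (E : GState b → GState b → Prop) (A : Set (GState b)) : Prop :=
  A.Nonempty ∧ (∀ x ∈ A, ∀ y ∈ A, Relation.ReflTransGen E x y) ∧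
  (∀ x ∈ A, ∀ y, E x y → y ∈ A)

/-- stable state: no outgoing edges -/
def IsStable (E : GState b → GState b → Prop) (x : GState b) : Prop :=
  ∀ y, ¬ E x y

end Generic

section Binarisation

variable {n : ℕ} {m : Fin n → ℕ}

/-- index set of the Boolean state space `𝔹^(m₁+⋯+mₙ)` -/
abbrev BIdx (m : Fin n → ℕ) := Σ i : Fin n, Fin (m i)

/-- all maximal levels equal to 1 -/
abbrev bOne (m : Fin n → ℕ) : BIdx m → ℕ := fun _ => 1

/-- the Boolean state space `𝔹^(m₁+⋯+mₙ)` -/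
abbrev BState (m : Fin n → ℕ) := GState (bOne m)

/-- the surjection `ψ : 𝔹^(m₁+⋯+mₙ) → M`, counting ones in each block -/
def psi (x : BState m) : GState m := fun i =>
  ⟨∑ j : Fin (m i), (x ⟨i, j⟩ : ℕ), Nat.lt_succ_of_le (by
    calc ∑ j : Fin (m i), (x ⟨i, j⟩ : ℕ) ≤ ∑ _j : Fin (m i), 1 :=
          Finset.sum_le_sum (fun j _ => Nat.lt_succ_iff.mp (x ⟨i, j⟩).isLt)
      _ = m i := by simp)⟩

/-- Van Ham's embedding `b₀ : M → 𝔹^(m₁+⋯+mₙ)`: level `k` ↦ `k` ones then zeros -/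
def vanHam (y : GState m) : BState m := fun p =>
  if (p.2 : ℕ) < (y p.1 : ℕ) then 1 else 0

/-- the binarisation `𝔹(f)` of an (asymptotic) evolution function `f` -/
def binf (f : GState m → GState m) : BState m → BState m := fun x p =>
  if (psi x p.1 : ℕ) < (f (psi x) p.1 : ℕ) then 1
  else if (f (psi x) p.1 : ℕ) < (psi x p.1 : ℕ) then 0
  else x p

/-- the binarisation `𝔹(Γ)` of a grid graph over `M`:
edge `x → x'` iff `d(x,x') = 1` and `ψ(x) → ψ(x')` in `Γ` -/
def binGraph (E : GState m → GState m → Prop) : BState m → BState m → Prop :=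
  fun x x' => dist1 (bOne m) x x' = 1 ∧ E (psi x) (psi x')

/-- the action of `𝕊 = ∏ᵢ S_{mᵢ}` on `𝔹^(m₁+⋯+mₙ)` permuting blocks coordinatewise -/
def act (σ : ∀ i : Fin n, Equiv.Perm (Fin (m i))) (x : BState m) : BState m :=
  fun p => x ⟨p.1, σ p.1 p.2⟩

/-- `𝕊`-symmetric Boolean evolution function -/
def SSym (g : BState m → BState m) : Prop :=
  ∀ (σ : ∀ i : Fin n, Equiv.Perm (Fin (m i))) (x : BState m) (p : BIdx m),
    g (act σ x) p = g x ⟨p.1, σ p.1 p.2⟩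

end Binarisation

/-!
`ψ` maps edges of `𝔹(Γ)` to edges of `Γ`, and conversely every edge of `Γ` leaving `ψ(x)` lifts
to an edge of `𝔹(Γ)` leaving `x`: flip one bit of the block in which the level changes. Hence `x`
is stable exactly when `ψ(x)` is, and `ψ` maps attractors onto attractors; since edges of `Γ` join
distinct states, a cyclic attractor is mapped to a cyclic one. Conversely, an attractor of `𝔹(Γ)`
reached from a preimage of a cyclic attractor `C` of `Γ` lies over `C`, where no state is stable,
so it has an edge and is cyclic.
-/

section Attractors

variable {ι : Type*} {b : ι → ℕ} {E : GState b → GState b → Prop} {A : Set (GState b)}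

theorem IsAttractor.mem_of_reflTransGen (hA : IsAttractor b E A) {x y : GState b} (hx : x ∈ A)
    (hxy : Relation.ReflTransGen E x y) : y ∈ A := by
  induction hxy with
  | refl => exact hx
  | tail _ hyz ih => exact hA.2.2 _ ih _ hyz

theorem IsAttractor.exists_edge_of_not_subsingleton (hA : IsAttractor b E A)
    (hA' : ¬ A.Subsingleton) {x : GState b} (hx : x ∈ A) : ∃ y ∈ A, E x y := by
  obtain ⟨z, hz, hzx⟩ := (Set.not_subsingleton_iff.1 hA').exists_ne x
  rcases (hA.2.1 x hx z hz).cases_head with rfl | ⟨y, hxy, -⟩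
  · exact absurd rfl hzx
  · exact ⟨y, hA.2.2 x hx y hxy, hxy⟩

/-- The states reachable from a state `u` minimising the number of reachable states form an
attractor. -/
theorem exists_isAttractor_reachable [Fintype ι] [DecidableEq ι] (E : GState b → GState b → Prop)
    (x : GState b) :
    ∃ A, IsAttractor b E A ∧ ∀ y ∈ A, Relation.ReflTransGen E x y := by
  classical
  let reach : GState b → Finset (GState b) := fun u => {v | Relation.ReflTransGen E u v}
  have mem_reach {u v : GState b} : v ∈ reach u ↔ Relation.ReflTransGen E u v := by
    simp [reach]
  obtain ⟨u, hxu, hmin⟩ :=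
    (reach x).exists_min_image (fun u => (reach u).card) ⟨x, mem_reach.2 .refl⟩
  have reach_eq (v : GState b) (hv : v ∈ reach u) : reach v = reach u :=
    Finset.eq_of_subset_of_card_le
      (fun w hw => mem_reach.2 ((mem_reach.1 hv).trans (mem_reach.1 hw)))
      (hmin v (mem_reach.2 ((mem_reach.1 hxu).trans (mem_reach.1 hv))))
  refine ⟨reach u, ⟨⟨u, mem_reach.2 .refl⟩, fun v hv w hw => ?_, fun v hv w hvw => ?_⟩,
    fun v hv => (mem_reach.1 hxu).trans (mem_reach.1 hv)⟩
  · rw [Finset.mem_coe, ← reach_eq v hv] at hw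
    exact mem_reach.1 hw
  · exact mem_reach.2 ((mem_reach.1 hv).tail hvw)

end Attractors

section Distance

variable {ι : Type*} [Fintype ι] {b : ι → ℕ}

theorem ne_of_dist1_eq_one {x y : GState b} (h : dist1 b x y = 1) : x ≠ y := by
  rintro rfl
  simp [dist1] at h

theorem dist1_update_self [DecidableEq ι] (x : GState b) (i : ι) (v : Fin (b i + 1)) :
    dist1 b x (Function.update x i v) = Nat.dist (x i) v := by
  rw [dist1, Finset.sum_eq_single i (fun k _ hk => by simp [hk]) (by simp), Function.update_self]

theorem exists_dist_eq_one_of_dist1_eq_one [DecidableEq ι] {x y : GState b}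
    (h : dist1 b x y = 1) :
    ∃ i, Nat.dist (x i) (y i) = 1 ∧ ∀ k ≠ i, x k = y k := by
  obtain ⟨i, -, hi⟩ := Finset.exists_ne_zero_of_sum_ne_zero (s := Finset.univ)
    (f := fun i => Nat.dist (x i) (y i)) (by rw [← dist1, h]; exact one_ne_zero)
  have hsplit := Finset.add_sum_erase Finset.univ (fun i => Nat.dist (x i) (y i))
    (Finset.mem_univ i)
  rw [← dist1, h] at hsplit
  have hrest : ∑ k ∈ Finset.univ.erase i, Nat.dist (x k) (y k) = 0 := by omega
  refine ⟨i, by omega, fun k hk => Fin.ext (Nat.eq_of_dist_eq_zero ?_)⟩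
  exact Finset.sum_eq_zero_iff.1 hrest k (Finset.mem_erase.2 ⟨hk, Finset.mem_univ k⟩)

end Distance

section Psi

variable {n : ℕ} {m : Fin n → ℕ}

theorem psi_update_of_ne (x : BState m) {p : BIdx m} (v : Fin 2) {i : Fin n} (hi : i ≠ p.1) :
    psi (Function.update x p v) i = psi x i := by
  ext
  simp only [psi]
  exact Finset.sum_congr rfl fun j _ => by
    rw [Function.update_of_ne (by rintro rfl; exact hi rfl)]

theorem psi_update_self_add (x : BState m) (i : Fin n) (j : Fin (m i)) (v : Fin 2) :
    (psi (Function.update x ⟨i, j⟩ v) i : ℕ) + x ⟨i, j⟩ = psi x i + v := by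
  simp only [psi]
  rw [← Finset.add_sum_erase _ _ (Finset.mem_univ j),
    ← Finset.add_sum_erase _ (fun j => (x ⟨i, j⟩ : ℕ)) (Finset.mem_univ j),
    Finset.sum_congr rfl fun j' hj' =>
      by rw [Function.update_of_ne (by simpa using Finset.ne_of_mem_erase hj')],
    Function.update_self]
  ring

theorem psi_vanHam (y : GState m) : psi (vanHam y) = y := by
  ext i
  simpa [psi, vanHam, apply_ite, Finset.sum_boole, Fin.card_filter_val_lt] using (y i).is_le

/-- To move level `i` of `ψ x` by one step towards `k`, flip a bit of block `i` that differs from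
`c` (`c = 1` to go up, `c = 0` to go down) to `c`. -/
theorem exists_bit_of_dist_psi_eq_one (x : BState m) (i : Fin n) {k : ℕ} (hk : k ≤ m i)
    (h : Nat.dist (psi x i) k = 1) :
    ∃ (j : Fin (m i)) (c : Fin 2), x ⟨i, j⟩ ≠ c ∧ k + x ⟨i, j⟩ = psi x i + c := by
  have hpsi : (psi x i : ℕ) = ∑ j, (x ⟨i, j⟩ : ℕ) := rfl
  unfold Nat.dist at h
  rcases (by omega : (psi x i : ℕ) < k ∨ k < psi x i) with hup | hdown
  · obtain ⟨j, -, hj⟩ : ∃ j ∈ Finset.univ, (x ⟨i, j⟩ : ℕ) < 1 :=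
      Finset.exists_lt_of_sum_lt (by simpa [← hpsi] using hup.trans_le hk)
    refine ⟨j, 1, fun hj1 => by simp [hj1] at hj, ?_⟩
    rw [Fin.val_one]
    omega
  · obtain ⟨j, -, hj⟩ : ∃ j ∈ Finset.univ, 0 < (x ⟨i, j⟩ : ℕ) :=
      Finset.exists_lt_of_sum_lt (by simpa [← hpsi] using (Nat.zero_le k).trans_lt hdown)
    refine ⟨j, 0, fun hj0 => by simp [hj0] at hj, ?_⟩
    have : (x ⟨i, j⟩ : ℕ) < 2 := (x ⟨i, j⟩).isLt
    rw [Fin.val_zero]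
    omega

theorem exists_dist1_eq_one_psi_eq (x : BState m) {y : GState m} (h : dist1 m (psi x) y = 1) :
    ∃ x', dist1 (bOne m) x x' = 1 ∧ psi x' = y := by
  obtain ⟨i, hi, hrest⟩ := exists_dist_eq_one_of_dist1_eq_one h
  obtain ⟨j, c, hjc, hval⟩ := exists_bit_of_dist_psi_eq_one x i (y i).is_le hi
  refine ⟨Function.update x ⟨i, j⟩ c, ?_, funext fun k => ?_⟩
  · have := Fin.val_ne_of_ne hjc
    have : (x ⟨i, j⟩ : ℕ) < 2 := (x ⟨i, j⟩).isLt
    have := c.isLt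
    rw [dist1_update_self, Nat.dist]
    omega
  · by_cases hk : k = i
    · subst hk
      have := psi_update_self_add x k j c
      ext
      omega
    · rw [psi_update_of_ne x c hk, hrest k hk]

end Psi

section BinGraph

variable {n : ℕ} {m : Fin n → ℕ} {E : GState m → GState m → Prop}

theorem exists_binGraph_psi_eq (hE : ∀ y z, E y z → dist1 m y z = 1) (x : BState m)
    {y : GState m} (h : E (psi x) y) : ∃ x', binGraph E x x' ∧ psi x' = y := by
  obtain ⟨x', hd, rfl⟩ := exists_dist1_eq_one_psi_eq x (hE _ _ h)
  exact ⟨x', ⟨hd, h⟩, rfl⟩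

theorem psi_ne_of_binGraph (hE : ∀ y z, E y z → dist1 m y z = 1) {x x' : BState m}
    (h : binGraph E x x') : psi x ≠ psi x' :=
  ne_of_dist1_eq_one (hE _ _ h.2)

theorem reflTransGen_psi_of_binGraph {x x' : BState m}
    (h : Relation.ReflTransGen (binGraph E) x x') : Relation.ReflTransGen E (psi x) (psi x') :=
  h.lift psi fun _ _ hxx' => hxx'.2

theorem isStable_binGraph_iff (hE : ∀ y z, E y z → dist1 m y z = 1) (x : BState m) :
    IsStable (bOne m) (binGraph E) x ↔ IsStable m E (psi x) := by
  refine ⟨fun hx y hy => ?_, fun hx x' hxx' => hx _ hxx'.2⟩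
  obtain ⟨x', hxx', -⟩ := exists_binGraph_psi_eq hE x hy
  exact hx x' hxx'

theorem IsAttractor.image_psi (hE : ∀ y z, E y z → dist1 m y z = 1) {A : Set (BState m)}
    (hA : IsAttractor (bOne m) (binGraph E) A) : IsAttractor m E (psi '' A) := by
  refine ⟨hA.1.image psi, ?_, ?_⟩
  · rintro _ ⟨x, hx, rfl⟩ _ ⟨x', hx', rfl⟩
    exact reflTransGen_psi_of_binGraph (hA.2.1 x hx x' hx')
  · rintro _ ⟨x, hx, rfl⟩ y hy
    obtain ⟨x', hxx', rfl⟩ := exists_binGraph_psi_eq hE x hy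
    exact ⟨x', hA.2.2 x hx x' hxx', rfl⟩

theorem IsAttractor.not_subsingleton_image_psi (hE : ∀ y z, E y z → dist1 m y z = 1)
    {A : Set (BState m)} (hA : IsAttractor (bOne m) (binGraph E) A) (hA' : ¬ A.Subsingleton) :
    ¬ (psi '' A).Subsingleton := by
  obtain ⟨x, hx⟩ := hA.1
  obtain ⟨x', hx', hxx'⟩ := hA.exists_edge_of_not_subsingleton hA' hx
  exact fun h => psi_ne_of_binGraph hE hxx' (h ⟨x, hx, rfl⟩ ⟨x', hx', rfl⟩)

theorem exists_isAttractor_binGraph_not_subsingleton (hE : ∀ y z, E y z → dist1 m y z = 1)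
    {C : Set (GState m)} (hC : IsAttractor m E C) (hC' : ¬ C.Subsingleton) :
    ∃ A : Set (BState m), IsAttractor (bOne m) (binGraph E) A ∧ ¬ A.Subsingleton := by
  obtain ⟨y, hy⟩ := hC.1
  obtain ⟨A, hA, hreach⟩ := exists_isAttractor_reachable (binGraph E) (vanHam y)
  obtain ⟨x, hx⟩ := hA.1
  have hxC : psi x ∈ C :=
    hC.mem_of_reflTransGen hy (psi_vanHam y ▸ reflTransGen_psi_of_binGraph (hreach x hx))
  obtain ⟨_, -, hedge⟩ := hC.exists_edge_of_not_subsingleton hC' hxC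
  obtain ⟨x', hxx', -⟩ := exists_binGraph_psi_eq hE x hedge
  exact ⟨A, hA, fun h => psi_ne_of_binGraph hE hxx' (congrArg psi (h hx (hA.2.2 x hx x' hxx')))⟩

end BinGraph

/-- a stable state exists in `𝔹(Γ)` iff one exists in `Γ`, and a
cyclic attractor exists in `𝔹(Γ)` iff one exists in `Γ`. -/
theorem stable_and_cyclic_iff
    {n : ℕ} {m : Fin n → ℕ} (E : GState m → GState m → Prop)
    (hE : IsGridGraph m E) :
    ((∃ x : BState m, IsStable (bOne m) (binGraph E) x) ↔
      (∃ y : GState m, IsStable m E y)) ∧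
    ((∃ A : Set (BState m), IsAttractor (bOne m) (binGraph E) A ∧ ¬ A.Subsingleton) ↔
      (∃ C : Set (GState m), IsAttractor m E C ∧ ¬ C.Subsingleton)) := by
  refine ⟨⟨?_, ?_⟩, ⟨?_, ?_⟩⟩
  · rintro ⟨x, hx⟩
    exact ⟨psi x, (isStable_binGraph_iff hE.1 x).1 hx⟩
  · rintro ⟨y, hy⟩
    exact ⟨vanHam y, (isStable_binGraph_iff hE.1 _).2 (by rwa [psi_vanHam])⟩
  · rintro ⟨A, hA, hA'⟩
    exact ⟨psi '' A, hA.image_psi hE.1, hA.not_subsingleton_image_psi hE.1 hA'⟩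
  · rintro ⟨C, hC, hC'⟩
    exact exists_isAttractor_binGraph_not_subsingleton hE.1 hC hC'

end GRN
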